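/- Let K be a closed cone in a real normed space, let 𝒜 be a bounded family of homogeneous, order-preserving maps on K, and let m ∈ ℕ. If there exist f ∈ 𝒜^m, a nonzero x ∈ K, and α > 0 such that f(x) ≥ α^m x (in the cone order), then the generalized spectral radius satisfies r(𝒜) ≥ α. -/

import Mathlib

open Filter Topology Set

noncomputable section

/-- A wedge in a real normed space: a convex set closed under positive scalar multiplication. -/
def IsWedge {X : Type*} [NormedAddCommGroup X] [NormedSpace ℝ X] (W : Set X) : Prop :=
  Convex ℝ W ∧ ∀ c : ℝ, 0 < c → ∀ x ∈ W, c • x ∈ W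

/-- A closed cone: closed, convex, closed under positive scalar multiplication, K ∩ (−K) = {0}. -/
def IsClosedCone {X : Type*} [NormedAddCommGroup X] [NormedSpace ℝ X] (K : Set X) : Prop :=
  IsClosed K ∧ Convex ℝ K ∧ (∀ c : ℝ, 0 < c → ∀ x ∈ K, c • x ∈ K) ∧ K ∩ (-K) = {0}

/-- A polyhedral cone: intersection of finitely many closed halfspaces through the origin. -/
def IsPolyhedralCone {X : Type*} [NormedAddCommGroup X] [NormedSpace ℝ X] (K : Set X) : Prop :=
  ∃ (k : ℕ) (φ : Fin k → (X →ₗ[ℝ] ℝ)), K = {x | ∀ i, 0 ≤ φ i x}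

/-- `f` maps `W` into itself and is positively homogeneous on `W`. -/
def HomogOn {X : Type*} [NormedAddCommGroup X] [NormedSpace ℝ X] (f : X → X) (W : Set X) : Prop :=
  Set.MapsTo f W W ∧ ∀ c : ℝ, 0 < c → ∀ x ∈ W, f (c • x) = c • f x

/-- `f` is order-preserving with respect to the order induced by the cone `K`. -/
def OrderPresOn {X : Type*} [NormedAddCommGroup X] [NormedSpace ℝ X] (f : X → X) (K : Set X) : Prop :=
  ∀ x ∈ K, ∀ y ∈ K, y - x ∈ K → f y - f x ∈ K

/-- `f` is subadditive on `K`: f(x+y) ≤ f(x)+f(y) in the cone order. -/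
def SubaddOn {X : Type*} [NormedAddCommGroup X] [NormedSpace ℝ X] (f : X → X) (K : Set X) : Prop :=
  ∀ x ∈ K, ∀ y ∈ K, (f x + f y) - f (x + y) ∈ K

/-- The norm of a homogeneous map on `W`: sup of ‖f x‖ over unit vectors of `W`. -/
def opNormW {X : Type*} [NormedAddCommGroup X] (f : X → X) (W : Set X) : ℝ :=
  sSup ((fun x => ‖f x‖) '' {x ∈ W | ‖x‖ = 1})

/-- A bounded homogeneous map on `W`. -/
def BoundedMapOn {X : Type*} [NormedAddCommGroup X] (f : X → X) (W : Set X) : Prop :=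
  ∃ C : ℝ, ∀ x ∈ W, ‖f x‖ ≤ C * ‖x‖

/-- A bounded family of homogeneous maps on `W`. -/
def BoundedFamOn {X : Type*} [NormedAddCommGroup X] (A : Set (X → X)) (W : Set X) : Prop :=
  ∃ C : ℝ, ∀ f ∈ A, ∀ x ∈ W, ‖f x‖ ≤ C * ‖x‖

/-- `famPow A m` = 𝒜^m, the set of m-fold compositions of maps from `A` (with 𝒜^0 = {id}). -/
def famPow {X : Type*} (A : Set (X → X)) : ℕ → Set (X → X)
  | 0 => {id}
  | m + 1 => {h | ∃ f ∈ A, ∃ g ∈ famPow A m, h = f ∘ g}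

/-- The composition of two families of maps. -/
def compFam {X : Type*} (A B : Set (X → X)) : Set (X → X) :=
  {h | ∃ f ∈ A, ∃ g ∈ B, h = f ∘ g}

/-- The Bonsall cone spectral radius r(f) = inf_{n>0} ‖f^n‖^{1/n}. -/
def coneSpecRad {X : Type*} [NormedAddCommGroup X] (f : X → X) (W : Set X) : ℝ :=
  ⨅ n : ℕ+, (opNormW (f^[(n : ℕ)]) W) ^ (((n : ℕ) : ℝ)⁻¹)

/-- sup_{f ∈ 𝒜^m} ‖f‖^{1/m}. -/
def jointTerm {X : Type*} [NormedAddCommGroup X] (A : Set (X → X)) (W : Set X) (m : ℕ) : ℝ :=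
  sSup ((fun f => (opNormW f W) ^ ((m : ℝ)⁻¹)) '' famPow A m)

/-- sup_{f ∈ 𝒜^m} r(f)^{1/m}. -/
def genTerm {X : Type*} [NormedAddCommGroup X] (A : Set (X → X)) (W : Set X) (m : ℕ) : ℝ :=
  sSup ((fun f => (coneSpecRad f W) ^ ((m : ℝ)⁻¹)) '' famPow A m)

/-- The joint spectral radius r̂(𝒜) = inf_{m>0} sup_{f ∈ 𝒜^m} ‖f‖^{1/m}. -/
def jointRad {X : Type*} [NormedAddCommGroup X] (A : Set (X → X)) (W : Set X) : ℝ :=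
  ⨅ m : ℕ+, jointTerm A W (m : ℕ)

/-- The generalized spectral radius r(𝒜) = sup_{m>0} sup_{f ∈ 𝒜^m} r(f)^{1/m}. -/
def genRad {X : Type*} [NormedAddCommGroup X] (A : Set (X → X)) (W : Set X) : ℝ :=
  ⨆ m : ℕ+, genTerm A W (m : ℕ)

/-- β_m = inf_{f ∈ 𝒜^m} ‖f‖. -/
def subBeta {X : Type*} [NormedAddCommGroup X] (A : Set (X → X)) (W : Set X) (m : ℕ) : ℝ :=
  sInf ((fun f => opNormW f W) '' famPow A m)

/-- γ_m = inf_{f ∈ 𝒜^m} r(f). -/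
def subGamma {X : Type*} [NormedAddCommGroup X] (A : Set (X → X)) (W : Set X) (m : ℕ) : ℝ :=
  sInf ((fun f => coneSpecRad f W) '' famPow A m)

/-- F_m^d = f_m ∘ ⋯ ∘ f_1 for a sequence d of maps. -/
def seqComp {X : Type*} (d : ℕ → X → X) : ℕ → X → X
  | 0 => id
  | m + 1 => d m ∘ seqComp d m

/-- The standard cone ℝⁿ_{≥0}. -/
def stdCone (n : ℕ) : Set (Fin n → ℝ) := {x | ∀ i, 0 ≤ x i}

/-- The closed face F_J of the standard cone. -/
def stdFace {n : ℕ} (J : Set (Fin n)) : Set (Fin n → ℝ) :=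
  {x | (∀ i, 0 ≤ x i) ∧ ∀ i ∉ J, x i = 0}

/-- A family of maps on ℝⁿ_{≥0} is irreducible if no non-trivial closed face is invariant
under every member of the family. -/
def IrreducibleFam {n : ℕ} (A : Set ((Fin n → ℝ) → Fin n → ℝ)) : Prop :=
  ¬ ∃ J : Set (Fin n), J.Nonempty ∧ J ≠ Set.univ ∧ ∀ f ∈ A, Set.MapsTo f (stdFace J) (stdFace J)

/-!
Iterating `f x ≥ α ^ m x` gives `f^[n] x ≥ α ^ (m n) x`. The cone need not be normal, so this
does not bound `‖f^[n] x‖` from below by `α ^ (m n) ‖x‖`; but since `K` is closed, the translate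
`x + K` stays at a positive distance `δ` from `0`, whence `‖f^[n]‖ ≥ α ^ (m n) c` with
`c = δ / ‖x‖ ∈ (0, 1]`. Applying this to `f^[k] ∈ 𝒜 ^ (k m)` gives
`r(𝒜) ≥ r(f^[k]) ^ (1 / (k m)) ≥ α c ^ (1 / (k m))`, and `c ^ (1 / (k m)) → 1` as `k → ∞`.
-/

section Cone

variable {X : Type*} [NormedAddCommGroup X] [NormedSpace ℝ X] {K : Set X}

theorem IsClosedCone.smul_mem (hK : IsClosedCone K) {c : ℝ} (hc : 0 < c) {x : X} (hx : x ∈ K) :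
    c • x ∈ K :=
  hK.2.2.1 c hc x hx

theorem IsClosedCone.zero_mem (hK : IsClosedCone K) : (0 : X) ∈ K :=
  (hK.2.2.2.symm ▸ rfl : (0 : X) ∈ K ∩ -K).1

theorem IsClosedCone.add_mem (hK : IsClosedCone K) {x y : X} (hx : x ∈ K) (hy : y ∈ K) :
    x + y ∈ K := by
  have hmid : (2⁻¹ : ℝ) • x + (2⁻¹ : ℝ) • y ∈ K :=
    hK.2.1 hx hy (by norm_num) (by norm_num) (by norm_num)
  simpa [smul_add, smul_smul] using hK.smul_mem two_pos hmid

theorem IsClosedCone.exists_pos_mul_le_norm (hK : IsClosedCone K) {x : X} (hx : x ∈ K)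
    (hx0 : x ≠ 0) : ∃ δ > 0, ∀ β > 0, ∀ y, y - β • x ∈ K → β * δ ≤ ‖y‖ := by
  set T : Set X := (· - x) ⁻¹' K
  have hT : IsClosed T := hK.1.preimage (continuous_id.sub continuous_const)
  have hxT : x ∈ T := by simpa [T] using hK.zero_mem
  have h0T : (0 : X) ∉ T := fun h0 => hx0 <| by
    have hmem : x ∈ K ∩ -K := ⟨hx, by simpa [T] using h0⟩
    rwa [hK.2.2.2] at hmem
  refine ⟨Metric.infDist 0 T, (hT.notMem_iff_infDist_pos ⟨x, hxT⟩).1 h0T, fun β hβ y hy => ?_⟩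
  have hyT : β⁻¹ • y ∈ T := by
    have := hK.smul_mem (inv_pos.2 hβ) hy
    rwa [smul_sub, smul_smul, inv_mul_cancel₀ hβ.ne', one_smul] at this
  have := Metric.infDist_le_dist_of_mem (x := (0 : X)) hyT
  rw [dist_zero_left, norm_smul, Real.norm_of_nonneg (inv_pos.2 hβ).le,
    le_inv_mul_iff₀' hβ] at this
  linarith

end Cone

section Maps

variable {X : Type*} [NormedAddCommGroup X] [NormedSpace ℝ X] {K : Set X} {f g : X → X}

theorem HomogOn.id : HomogOn (id : X → X) K :=
  ⟨mapsTo_id K, fun _ _ _ _ => rfl⟩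

theorem HomogOn.comp (hf : HomogOn f K) (hg : HomogOn g K) : HomogOn (f ∘ g) K :=
  ⟨hf.1.comp hg.1, fun c hc x hx => by
    simp only [Function.comp_apply, hg.2 c hc x hx, hf.2 c hc (g x) (hg.1 hx)]⟩

theorem HomogOn.iterate (hf : HomogOn f K) : ∀ n, HomogOn f^[n] K
  | 0 => HomogOn.id
  | n + 1 => by rw [Function.iterate_succ']; exact hf.comp (hf.iterate n)

theorem OrderPresOn.id : OrderPresOn (id : X → X) K :=
  fun _ _ _ _ h => h

theorem OrderPresOn.comp (hf : OrderPresOn f K) (hg : OrderPresOn g K) (hgK : MapsTo g K K) :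
    OrderPresOn (f ∘ g) K :=
  fun x hx y hy h => hf _ (hgK hx) _ (hgK hy) (hg x hx y hy h)

theorem iterate_sub_pow_smul_mem (hK : IsClosedCone K) (hf : HomogOn f K) (hfo : OrderPresOn f K)
    {x : X} (hx : x ∈ K) {β : ℝ} (hβ : 0 < β) (h : f x - β • x ∈ K) :
    ∀ n, f^[n] x - β ^ n • x ∈ K
  | 0 => by simpa using hK.zero_mem
  | n + 1 => by
    have hβn : 0 < β ^ n := pow_pos hβ n
    have hmono : f (f^[n] x) - f (β ^ n • x) ∈ K :=
      hfo _ (hK.smul_mem hβn hx) _ (hf.iterate n |>.1 hx)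
        (iterate_sub_pow_smul_mem hK hf hfo hx hβ h n)
    have hscaled : β ^ n • (f x - β • x) ∈ K := hK.smul_mem hβn h
    convert hK.add_mem hmono hscaled using 1
    rw [Function.iterate_succ_apply', hf.2 _ hβn x hx, pow_succ, smul_sub, smul_smul]
    abel

end Maps

section FamPow

variable {X : Type*} {A : Set (X → X)}

@[elab_as_elim]
theorem famPow_induction {P : ℕ → (X → X) → Prop} (zero : P 0 id)
    (succ : ∀ p, ∀ f ∈ A, ∀ g ∈ famPow A p, P p g → P (p + 1) (f ∘ g)) :
    ∀ {p g}, g ∈ famPow A p → P p g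
  | 0, _, rfl => zero
  | p + 1, _, ⟨f, hf, g, hg, rfl⟩ => succ p f hf g hg (famPow_induction zero succ hg)

theorem comp_mem_famPow {a b : ℕ} {g h : X → X} (hg : g ∈ famPow A a) (hh : h ∈ famPow A b) :
    g ∘ h ∈ famPow A (a + b) := by
  refine famPow_induction (by simpa using hh) (fun a f hf g _ ih => ?_) hg
  rw [Nat.add_right_comm]
  exact ⟨f, hf, g ∘ h, ih, rfl⟩

theorem iterate_mem_famPow {m : ℕ} {f : X → X} (hf : f ∈ famPow A m) :
    ∀ k, f^[k] ∈ famPow A (k * m)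
  | 0 => by rw [zero_mul]; rfl
  | k + 1 => by
    rw [Function.iterate_succ', Nat.succ_mul, Nat.add_comm]
    exact comp_mem_famPow hf (iterate_mem_famPow hf k)

theorem homogOn_and_orderPresOn_of_mem_famPow [NormedAddCommGroup X] [NormedSpace ℝ X]
    {K : Set X} (hA : ∀ f ∈ A, HomogOn f K ∧ OrderPresOn f K) {p : ℕ} {g : X → X}
    (hg : g ∈ famPow A p) : HomogOn g K ∧ OrderPresOn g K := by
  refine famPow_induction ⟨HomogOn.id, OrderPresOn.id⟩ (fun p f hf g _ ih => ?_) hg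
  exact ⟨(hA f hf).1.comp ih.1, (hA f hf).2.comp ih.2 ih.1.1⟩

theorem BoundedFamOn.exists_famPow_bound [NormedAddCommGroup X] {W : Set X}
    (hbdd : BoundedFamOn A W) (hA : ∀ f ∈ A, MapsTo f W W) :
    ∃ C, 0 ≤ C ∧ ∀ {p g}, g ∈ famPow A p → ∀ x ∈ W, ‖g x‖ ≤ C ^ p * ‖x‖ := by
  obtain ⟨C, hC⟩ := hbdd
  refine ⟨max C 0, le_max_right _ _, fun {p g} hg => ?_⟩
  refine (famPow_induction (P := fun p g => MapsTo g W W ∧ ∀ x ∈ W, ‖g x‖ ≤ max C 0 ^ p * ‖x‖)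
    ⟨mapsTo_id W, by simp⟩ (fun p f hf g _ ih => ⟨(hA f hf).comp ih.1, fun x hx => ?_⟩) hg).2
  calc ‖f (g x)‖ ≤ max C 0 * ‖g x‖ :=
        (hC f hf _ (ih.1 hx)).trans (by gcongr; exact le_max_left _ _)
    _ ≤ max C 0 * (max C 0 ^ p * ‖x‖) := by gcongr; exact ih.2 x hx
    _ = max C 0 ^ (p + 1) * ‖x‖ := by ring

end FamPow

section SpectralRadius

variable {X : Type*} [NormedAddCommGroup X] {W : Set X} {f : X → X}

theorem opNormW_nonneg : 0 ≤ opNormW f W :=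
  Real.sSup_nonneg <| by rintro _ ⟨x, -, rfl⟩; exact norm_nonneg _

theorem opNormW_le {C : ℝ} (hC : 0 ≤ C) (h : ∀ x ∈ W, ‖f x‖ ≤ C * ‖x‖) : opNormW f W ≤ C :=
  Real.sSup_le (by rintro _ ⟨x, ⟨hx, hx1⟩, rfl⟩; simpa [hx1] using h x hx) hC

theorem norm_apply_le_opNormW (hf : BoundedMapOn f W) {x : X} (hx : x ∈ W) (hx1 : ‖x‖ = 1) :
    ‖f x‖ ≤ opNormW f W := by
  obtain ⟨C, hC⟩ := hf
  refine le_csSup ⟨C, ?_⟩ ⟨x, ⟨hx, hx1⟩, rfl⟩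
  rintro _ ⟨y, ⟨hy, hy1⟩, rfl⟩
  simpa [hy1] using hC y hy

theorem coneSpecRad_nonneg : 0 ≤ coneSpecRad f W :=
  Real.iInf_nonneg fun _ => Real.rpow_nonneg opNormW_nonneg _

theorem coneSpecRad_le_opNormW : coneSpecRad f W ≤ opNormW f W := by
  have hbdd : BddBelow (range fun n : ℕ+ => opNormW f^[n] W ^ ((n : ℕ) : ℝ)⁻¹) :=
    ⟨0, by rintro _ ⟨n, rfl⟩; exact Real.rpow_nonneg opNormW_nonneg _⟩
  simpa [coneSpecRad] using ciInf_le hbdd 1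

/-- `c ≤ 1` makes `c ≤ c ^ (1 / n)`, so the constant survives the `n`-th roots uniformly. -/
theorem mul_le_coneSpecRad {β c : ℝ} (hβ : 0 ≤ β) (hc : 0 < c) (hc1 : c ≤ 1)
    (h : ∀ n : ℕ, 0 < n → β ^ n * c ≤ opNormW f^[n] W) : β * c ≤ coneSpecRad f W := by
  refine le_ciInf fun n => ?_
  calc β * c ≤ β * c ^ ((n : ℕ) : ℝ)⁻¹ := by
        gcongr
        exact Real.self_le_rpow_of_le_one hc.le hc1
          (inv_le_one_of_one_le₀ (Nat.one_le_cast.2 n.pos))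
    _ = (β ^ (n : ℕ) * c) ^ ((n : ℕ) : ℝ)⁻¹ := by
        rw [Real.mul_rpow (by positivity) hc.le, Real.pow_rpow_inv_natCast hβ n.ne_zero]
    _ ≤ opNormW f^[n] W ^ ((n : ℕ) : ℝ)⁻¹ := by gcongr; exact h n n.pos

theorem mul_div_norm_le_coneSpecRad [NormedSpace ℝ X] {K : Set X} (hK : IsClosedCone K)
    (hf : HomogOn f K) (hfo : OrderPresOn f K) (hfb : ∀ n, BoundedMapOn f^[n] K)
    {x : X} (hx : x ∈ K) (hx0 : x ≠ 0) {δ : ℝ} (hδ0 : 0 < δ)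
    (hδ : ∀ β > 0, ∀ y, y - β • x ∈ K → β * δ ≤ ‖y‖)
    {β : ℝ} (hβ : 0 < β) (h : f x - β • x ∈ K) : β * (δ / ‖x‖) ≤ coneSpecRad f K := by
  have hxn : 0 < ‖x‖ := norm_pos_iff.2 hx0
  have hδx : δ ≤ ‖x‖ := by simpa using hδ 1 one_pos x (by simpa using hK.zero_mem)
  refine mul_le_coneSpecRad hβ.le (div_pos hδ0 hxn) ((div_le_one hxn).2 hδx) fun n _ => ?_
  have hu : ‖x‖⁻¹ • x ∈ K := hK.smul_mem (inv_pos.2 hxn) hx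
  have hu1 : ‖‖x‖⁻¹ • x‖ = 1 := by
    rw [norm_smul, Real.norm_of_nonneg (inv_nonneg.2 hxn.le), inv_mul_cancel₀ hxn.ne']
  calc β ^ n * (δ / ‖x‖) = ‖x‖⁻¹ * (β ^ n * δ) := by ring
    _ ≤ ‖x‖⁻¹ * ‖f^[n] x‖ := by
        gcongr
        exact hδ _ (pow_pos hβ n) _ (iterate_sub_pow_smul_mem hK hf hfo hx hβ h n)
    _ = ‖f^[n] (‖x‖⁻¹ • x)‖ := by
        rw [(hf.iterate n).2 _ (inv_pos.2 hxn) x hx, norm_smul,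
          Real.norm_of_nonneg (inv_nonneg.2 hxn.le)]
    _ ≤ opNormW f^[n] K := norm_apply_le_opNormW (hfb n) hu hu1

variable {A : Set (X → X)}

theorem coneSpecRad_rpow_inv_le_genRad (hbdd : BoundedFamOn A W) (hA : ∀ f ∈ A, MapsTo f W W)
    {p : ℕ} (hp : 0 < p) {g : X → X} (hg : g ∈ famPow A p) :
    coneSpecRad g W ^ (p : ℝ)⁻¹ ≤ genRad A W := by
  obtain ⟨C, hC0, hC⟩ := hbdd.exists_famPow_bound hA
  have hterm : ∀ {q : ℕ}, 0 < q → ∀ g ∈ famPow A q, coneSpecRad g W ^ (q : ℝ)⁻¹ ≤ C := by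
    intro q hq g hg
    calc coneSpecRad g W ^ (q : ℝ)⁻¹ ≤ (C ^ q) ^ (q : ℝ)⁻¹ := by
          gcongr
          · exact coneSpecRad_nonneg
          · exact coneSpecRad_le_opNormW.trans (opNormW_le (by positivity) (hC hg))
      _ = C := Real.pow_rpow_inv_natCast hC0 hq.ne'
  have hgenTerm : ∀ q : ℕ+, genTerm A W q ≤ C := fun q =>
    Real.sSup_le (by rintro _ ⟨g, hg, rfl⟩; exact hterm q.pos g hg) hC0
  calc coneSpecRad g W ^ (p : ℝ)⁻¹ ≤ genTerm A W (⟨p, hp⟩ : ℕ+) :=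
        le_csSup ⟨C, by rintro _ ⟨g, hg, rfl⟩; exact hterm hp g hg⟩ ⟨g, hg, rfl⟩
    _ ≤ genRad A W := le_ciSup ⟨C, by rintro _ ⟨q, rfl⟩; exact hgenTerm q⟩ _

end SpectralRadius

theorem tendsto_const_rpow_inv_natCast {c : ℝ} (hc : 0 < c) :
    Tendsto (fun n : ℕ => c ^ (n : ℝ)⁻¹) atTop (𝓝 1) := by
  simpa [Function.comp_def] using ((Real.continuous_const_rpow hc.ne').tendsto 0).comp
    (tendsto_inv_atTop_zero.comp tendsto_natCast_atTop_atTop)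

theorem statement3 {X : Type*} [NormedAddCommGroup X] [NormedSpace ℝ X]
    (K : Set X) (hK : IsClosedCone K)
    (A : Set (X → X)) (hA : ∀ f ∈ A, HomogOn f K ∧ OrderPresOn f K)
    (hbdd : BoundedFamOn A K)
    (m : ℕ) (hm : 0 < m) (f : X → X) (hf : f ∈ famPow A m)
    (x : X) (hx : x ∈ K) (hx0 : x ≠ 0)
    (α : ℝ) (hα : 0 < α) (hge : f x - α ^ m • x ∈ K) :
    α ≤ genRad A K := by
  obtain ⟨δ, hδ0, hδ⟩ := hK.exists_pos_mul_le_norm hx hx0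
  set c := δ / ‖x‖
  have hAK : ∀ g ∈ A, MapsTo g K K := fun g hg => (hA g hg).1.1
  obtain ⟨C, -, hC⟩ := hbdd.exists_famPow_bound hAK
  have hfA := homogOn_and_orderPresOn_of_mem_famPow hA hf
  have hspec (k : ℕ) : α ^ (k * m) * c ≤ coneSpecRad f^[k] K := by
    have hfk := iterate_mem_famPow hf k
    have hfkA := homogOn_and_orderPresOn_of_mem_famPow hA hfk
    have hge' := iterate_sub_pow_smul_mem hK hfA.1 hfA.2 hx (pow_pos hα m) hge k
    rw [← pow_mul, mul_comm] at hge'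
    exact mul_div_norm_le_coneSpecRad hK hfkA.1 hfkA.2
      (fun n => ⟨_, hC (iterate_mem_famPow hfk n)⟩) hx hx0 hδ0 hδ (pow_pos hα _) hge'
  have hgen (k : ℕ) (hk : 0 < k) : α * c ^ ((k * m : ℕ) : ℝ)⁻¹ ≤ genRad A K :=
    calc α * c ^ ((k * m : ℕ) : ℝ)⁻¹ = (α ^ (k * m) * c) ^ ((k * m : ℕ) : ℝ)⁻¹ := by
          rw [Real.mul_rpow (by positivity) (by positivity),
            Real.pow_rpow_inv_natCast hα.le (Nat.mul_pos hk hm).ne']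
      _ ≤ coneSpecRad f^[k] K ^ ((k * m : ℕ) : ℝ)⁻¹ := by gcongr; exact hspec k
      _ ≤ genRad A K :=
          coneSpecRad_rpow_inv_le_genRad hbdd hAK (Nat.mul_pos hk hm) (iterate_mem_famPow hf k)
  have hlim : Tendsto (fun k : ℕ => α * c ^ ((k * m : ℕ) : ℝ)⁻¹) atTop (𝓝 (α * 1)) :=
    ((tendsto_const_rpow_inv_natCast (by positivity)).comp
      (tendsto_id.atTop_mul_const' hm)).const_mul α
  simpa using le_of_tendsto hlim (eventually_atTop.2 ⟨1, hgen⟩)
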